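/- arXiv:1812.01419 — 5 statements merged into one kernel-verified Lean document; each statement's English description precedes it below -/
import Mathlib

section
/- Let σ ⊂ 𝕋 be measurable, partitioned into disjoint measurable sets τ_n (n ∈ ℕ) with σ = ⋃_n τ_n. Let C > 0, and let ξ_n > 0 with Σ_n ξ_n² < ∞. Let η_n, φ_n, ψ_n ∈ L²(σ) with |η_n| ≤ 1 on τ_n, |η_n| ≤ ξ_n on σ∖τ_n, and |φ_n| ≤ C|ψ_n| a.e. on σ. For each t > 0 and n, let ψ_{n,t} ∈ L²(σ) with |ψ_n| ≤ |ψ_{n,t}| a.e. and ‖ψ_n/ψ_{n,t} − 1‖_{L²(σ)} → 0 as t → 0 for each n. Define α_t = Σ_n η_n² φ_n/ψ_{n,t} and α = Σ_n η_n² φ_n/ψ_n. Then sup_{t>0} ‖α_t‖_{L^∞(σ)} < ∞ and ‖α_t − α‖_{L²(σ)} → 0 as t → 0. -/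
/-!
Pointwise, `‖η n‖² ≤ 1_{τ n} + ξ n²`, and since the `τ n` are disjoint, `∑ ‖η n‖² ≤ 1 + ∑ ξ n²`.
As `‖φ n / ψ_{n,t}‖ ≤ C`, this bounds `α_t` uniformly. For the convergence,
`α_t - α = ∑ η n² (φ n / ψ n) (ψ n / ψ_{n,t} - 1)`, so Cauchy–Schwarz with the weights `‖η n‖²`
gives `|α_t - α|² ≤ C² (1 + ∑ ξ n²) ∑ ‖η n‖² |ψ n / ψ_{n,t} - 1|²`. After integration, the
`n`-th term tends to `0` and is dominated by `4 (μ (τ n) + ξ n² μ Ω)`, which is summable because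
the `τ n` are disjoint, so Tannery's theorem concludes.
-/

open MeasureTheory Filter Topology

section Elementary

variable {𝕜 : Type*} [NormedField 𝕜]

lemma norm_div_le_of_norm_le_mul {C : ℝ} (hC : 0 ≤ C) {a b w : 𝕜} (hab : ‖a‖ ≤ C * ‖b‖)
    (hbw : ‖b‖ ≤ ‖w‖) : ‖a / w‖ ≤ C := by
  rcases eq_or_ne w 0 with rfl | hw
  · simpa using hC
  rw [norm_div, div_le_iff₀ (norm_pos_iff.mpr hw)]
  exact hab.trans (mul_le_mul_of_nonneg_left hbw hC)

lemma norm_div_sub_one_le_two {b w : 𝕜} (hbw : ‖b‖ ≤ ‖w‖) : ‖b / w - 1‖ ≤ 2 := by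
  have hdiv : ‖b / w‖ ≤ 1 := norm_div_le_of_norm_le_mul zero_le_one (one_mul _).ge hbw
  calc ‖b / w - 1‖ ≤ ‖b / w‖ + ‖(1 : 𝕜)‖ := norm_sub_le _ _
    _ ≤ 2 := by rw [norm_one]; linarith

lemma norm_div_sub_one_sq_le_four {b w : 𝕜} (hbw : ‖b‖ ≤ ‖w‖) : ‖b / w - 1‖ ^ 2 ≤ 4 := by
  nlinarith [norm_div_sub_one_le_two hbw, norm_nonneg (b / w - 1)]

lemma div_sub_div_eq_div_mul_div_sub_one {a b w : 𝕜} (hab : b = 0 → a = 0) :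
    a / w - a / b = a / b * (b / w - 1) := by
  rcases eq_or_ne b 0 with rfl | hb
  · simp [hab rfl]
  rcases eq_or_ne w 0 with rfl | hw
  · simp
  field_simp

lemma norm_sq_mul_le {x q : 𝕜} {C : ℝ} (hq : ‖q‖ ≤ C) : ‖x ^ 2 * q‖ ≤ ‖x‖ ^ 2 * C := by
  rw [norm_mul, norm_pow]
  exact mul_le_mul_of_nonneg_left hq (by positivity)

end Elementary

lemma tsum_sq_le_tsum_mul_tsum_of_sq_le_mul {ι : Type*} {r f g : ι → ℝ}
    (hf0 : ∀ i, 0 ≤ f i) (hg0 : ∀ i, 0 ≤ g i) (hf : Summable f) (hg : Summable g)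
    (hrfg : ∀ i, r i ^ 2 ≤ f i * g i) : (∑' i, r i) ^ 2 ≤ (∑' i, f i) * ∑' i, g i := by
  have hr : Summable r := by
    refine (hf.add hg).of_norm_bounded fun i => ?_
    rw [Real.norm_eq_abs]
    exact abs_le_of_sq_le_sq (by nlinarith [hf0 i, hg0 i, hrfg i]) (add_nonneg (hf0 i) (hg0 i))
  exact le_of_tendsto_of_tendsto' (hr.hasSum.pow 2) (Tendsto.mul hf.hasSum hg.hasSum) fun s =>
    Finset.sum_sq_le_sum_mul_sum_of_sq_le_mul s (fun i _ => hf0 i) (fun i _ => hg0 i)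
      fun i _ => hrfg i

section WeightedSeries

variable {ι 𝕜 : Type*} [NormedField 𝕜] {e : ι → 𝕜}

lemma summable_sq_mul_of_norm_le [CompleteSpace 𝕜] {q : ι → 𝕜} {C : ℝ}
    (he : Summable fun n => ‖e n‖ ^ 2) (hq : ∀ n, ‖q n‖ ≤ C) : Summable fun n => e n ^ 2 * q n :=
  (he.mul_right C).of_norm_bounded fun n => norm_sq_mul_le (hq n)

lemma norm_tsum_sq_mul_le {q : ι → 𝕜} {C : ℝ} (he : Summable fun n => ‖e n‖ ^ 2)
    (hq : ∀ n, ‖q n‖ ≤ C) : ‖∑' n, e n ^ 2 * q n‖ ≤ (∑' n, ‖e n‖ ^ 2) * C := by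
  rw [← tsum_mul_right]
  exact tsum_of_norm_bounded (he.mul_right C).hasSum fun n => norm_sq_mul_le (hq n)

lemma norm_tsum_sq_mul_div_sub_sq_le [CompleteSpace 𝕜] {f g w : ι → 𝕜} {C : ℝ} (hC : 0 ≤ C)
    (he : Summable fun n => ‖e n‖ ^ 2) (hfg : ∀ n, ‖f n‖ ≤ C * ‖g n‖)
    (hgw : ∀ n, ‖g n‖ ≤ ‖w n‖) :
    ‖∑' n, e n ^ 2 * (f n / w n) - ∑' n, e n ^ 2 * (f n / g n)‖ ^ 2 ≤
      C ^ 2 * (∑' n, ‖e n‖ ^ 2) * ∑' n, ‖e n‖ ^ 2 * ‖g n / w n - 1‖ ^ 2 := by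
  set ρ := fun n => ‖g n / w n - 1‖
  have hρ : ∀ n, ρ n ≤ 2 := fun n => norm_div_sub_one_le_two (hgw n)
  have hρ0 : ∀ n, 0 ≤ ρ n := fun n => norm_nonneg _
  have hsum₁ : Summable fun n => ‖e n‖ ^ 2 * ρ n :=
    (he.mul_right 2).of_nonneg_of_le (fun n => by positivity)
      fun n => mul_le_mul_of_nonneg_left (hρ n) (by positivity)
  have hsum₂ : Summable fun n => ‖e n‖ ^ 2 * ρ n ^ 2 :=
    (he.mul_right 4).of_nonneg_of_le (fun n => by positivity)
      fun n => mul_le_mul_of_nonneg_left (norm_div_sub_one_sq_le_four (hgw n)) (by positivity)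
  have hfg' : ∀ n, ‖f n / g n‖ ≤ C := fun n => norm_div_le_of_norm_le_mul hC (hfg n) le_rfl
  have hdiff : ∑' n, e n ^ 2 * (f n / w n) - ∑' n, e n ^ 2 * (f n / g n) =
      ∑' n, e n ^ 2 * (f n / g n * (g n / w n - 1)) := by
    rw [← (summable_sq_mul_of_norm_le he fun n =>
      norm_div_le_of_norm_le_mul hC (hfg n) (hgw n)).tsum_sub (summable_sq_mul_of_norm_le he hfg')]
    refine tsum_congr fun n => ?_
    rw [← mul_sub, div_sub_div_eq_div_mul_div_sub_one fun hg => ?_]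
    simpa [hg] using hfg n
  have hnorm : ‖∑' n, e n ^ 2 * (f n / g n * (g n / w n - 1))‖ ≤ ∑' n, ‖e n‖ ^ 2 * ρ n * C := by
    refine tsum_of_norm_bounded (hsum₁.mul_right C).hasSum fun n => ?_
    rw [mul_assoc, mul_comm (ρ n)]
    refine norm_sq_mul_le ?_
    rw [norm_mul]
    exact mul_le_mul_of_nonneg_right (hfg' n) (hρ0 n)
  have hcs := tsum_sq_le_tsum_mul_tsum_of_sq_le_mul (fun n => sq_nonneg ‖e n‖)
    (fun n => by positivity) he hsum₂ fun n => (by ring : (‖e n‖ ^ 2 * ρ n) ^ 2 =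
      ‖e n‖ ^ 2 * (‖e n‖ ^ 2 * ρ n ^ 2)).le
  calc _ ≤ (∑' n, ‖e n‖ ^ 2 * ρ n * C) ^ 2 := by
        rw [hdiff]; exact pow_le_pow_left₀ (norm_nonneg _) hnorm 2
    _ = C ^ 2 * (∑' n, ‖e n‖ ^ 2 * ρ n) ^ 2 := by rw [tsum_mul_right]; ring
    _ ≤ C ^ 2 * ((∑' n, ‖e n‖ ^ 2) * ∑' n, ‖e n‖ ^ 2 * ρ n ^ 2) := by gcongr
    _ = _ := by ring

end WeightedSeries

section Partition

variable {ι α : Type*} {s : ι → Set α}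

lemma hasSum_indicator_of_pairwise_disjoint {M : Type*} [AddCommMonoid M] [TopologicalSpace M]
    (hs : Pairwise (Function.onFun Disjoint s)) (f : α → M) (x : α) :
    HasSum (fun i => (s i).indicator f x) ((⋃ i, s i).indicator f x) := by
  by_cases hx : x ∈ ⋃ i, s i
  · obtain ⟨i, hi⟩ := Set.mem_iUnion.mp hx
    rw [Set.indicator_of_mem hx, ← Set.indicator_of_mem hi f]
    exact hasSum_single i fun j hj =>
      Set.indicator_of_notMem (fun hj' => Set.disjoint_left.mp (hs hj) hj' hi) f
  · rw [Set.indicator_of_notMem hx]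
    convert hasSum_zero with i
    exact Set.indicator_of_notMem (fun hi => hx (Set.mem_iUnion.mpr ⟨i, hi⟩)) f

lemma norm_sq_le_indicator_add_sq {E : Type*} [SeminormedAddGroup E] {t : Set α} {x : α} {v : E}
    {c : ℝ} (h₁ : x ∈ t → ‖v‖ ≤ 1) (h₂ : x ∉ t → ‖v‖ ≤ c) :
    ‖v‖ ^ 2 ≤ t.indicator 1 x + c ^ 2 := by
  by_cases hx : x ∈ t
  · rw [Set.indicator_of_mem hx, Pi.one_apply]
    nlinarith [norm_nonneg v, h₁ hx, sq_nonneg c]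
  · rw [Set.indicator_of_notMem hx, zero_add]
    exact pow_le_pow_left₀ (norm_nonneg v) (h₂ hx) 2

lemma summable_and_tsum_le_of_le_indicator_add (hs : Pairwise (Function.onFun Disjoint s))
    {a b : ι → ℝ} (hb : Summable b) {x : α} (ha0 : ∀ i, 0 ≤ a i)
    (ha : ∀ i, a i ≤ (s i).indicator 1 x + b i) :
    Summable a ∧ ∑' i, a i ≤ 1 + ∑' i, b i := by
  have hc := (hasSum_indicator_of_pairwise_disjoint hs 1 x).add hb.hasSum
  have hsum : Summable a := hc.summable.of_nonneg_of_le ha0 ha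
  refine ⟨hsum, (hsum.tsum_le_tsum ha hc.summable).trans ?_⟩
  rw [hc.tsum_eq]
  gcongr
  exact Set.indicator_le_self' (fun _ _ => zero_le_one) x

end Partition

section Integrals

variable {Ω : Type*} [MeasurableSpace Ω] {μ : Measure Ω} [IsFiniteMeasure μ]

lemma integral_mul_le_of_le_indicator_add {s : Set Ω} (hs : MeasurableSet s) {a g : Ω → ℝ}
    {b M : ℝ} (ha0 : ∀ᵐ x ∂μ, 0 ≤ a x) (ha : ∀ᵐ x ∂μ, a x ≤ s.indicator 1 x + b)
    (hg : ∀ᵐ x ∂μ, 0 ≤ g x ∧ g x ≤ M) :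
    ∫ x, a x * g x ∂μ ≤ M * (μ.real s + b * μ.real Set.univ) := by
  have hind : Integrable (s.indicator (1 : Ω → ℝ)) μ := (integrable_const 1).indicator hs
  have hint : Integrable (fun x => M * (s.indicator 1 x + b)) μ :=
    (hind.add (integrable_const b)).const_mul M
  calc ∫ x, a x * g x ∂μ ≤ ∫ x, M * (s.indicator 1 x + b) ∂μ := by
        refine integral_mono_of_nonneg ?_ hint ?_
        · filter_upwards [ha0, hg] with x ha0 hg using mul_nonneg ha0 hg.1
        · filter_upwards [ha0, ha, hg] with x ha0 ha hg
          rw [mul_comm M]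
          exact mul_le_mul ha hg.2 hg.1 (ha0.trans ha)
    _ = M * (μ.real s + b * μ.real Set.univ) := by
        rw [integral_const_mul, integral_add hind (integrable_const b),
          integral_indicator_one hs, integral_const, smul_eq_mul, mul_comm b]

lemma integral_norm_tsum_sub_sq_le {C S : ℝ} (hC : 0 ≤ C) {η φ ψ w : ℕ → Ω → ℂ}
    (hηm : ∀ n, Measurable (η n)) (hψm : ∀ n, Measurable (ψ n)) (hwm : ∀ n, Measurable (w n))
    (hη : ∀ᵐ ζ ∂μ, Summable (fun n => ‖η n ζ‖ ^ 2) ∧ ∑' n, ‖η n ζ‖ ^ 2 ≤ S)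
    (hφψ : ∀ n, ∀ᵐ ζ ∂μ, ‖φ n ζ‖ ≤ C * ‖ψ n ζ‖) (hψw : ∀ n, ∀ᵐ ζ ∂μ, ‖ψ n ζ‖ ≤ ‖w n ζ‖)
    (hsum : Summable fun n => ∫ ζ, ‖η n ζ‖ ^ 2 * ‖ψ n ζ / w n ζ - 1‖ ^ 2 ∂μ) :
    ∫ ζ, ‖∑' n, η n ζ ^ 2 * (φ n ζ / w n ζ) - ∑' n, η n ζ ^ 2 * (φ n ζ / ψ n ζ)‖ ^ 2 ∂μ ≤
      C ^ 2 * S * ∑' n, ∫ ζ, ‖η n ζ‖ ^ 2 * ‖ψ n ζ / w n ζ - 1‖ ^ 2 ∂μ := by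
  set F := fun n ζ => ‖η n ζ‖ ^ 2 * ‖ψ n ζ / w n ζ - 1‖ ^ 2
  have hFm : ∀ n, Measurable (F n) := fun n => by fun_prop
  have hF : ∀ᵐ ζ ∂μ, Summable (F · ζ) ∧ (∀ n, F n ζ ≤ 4 * S) ∧ ∑' n, F n ζ ≤ 4 * S := by
    filter_upwards [hη, ae_all_iff.mpr hψw] with ζ ⟨hs, hS⟩ hψw
    have hle : ∀ n, F n ζ ≤ ‖η n ζ‖ ^ 2 * 4 := fun n =>
      mul_le_mul_of_nonneg_left (norm_div_sub_one_sq_le_four (hψw n)) (by positivity)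
    have hsF : Summable (F · ζ) := (hs.mul_right 4).of_nonneg_of_le (fun n => by positivity) hle
    have htsum : ∑' n, F n ζ ≤ 4 * S := by
      calc ∑' n, F n ζ ≤ (∑' n, ‖η n ζ‖ ^ 2) * 4 := by
            rw [← tsum_mul_right]; exact hsF.tsum_le_tsum hle (hs.mul_right 4)
        _ ≤ 4 * S := by linarith
    exact ⟨hsF, fun n => (hsF.le_tsum n fun _ _ => by positivity).trans htsum, htsum⟩
  have hFi : ∀ n, Integrable (F n) μ := fun n =>
    .of_bound (hFm n).aestronglyMeasurable (4 * S) (hF.mono fun ζ h => by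
      rw [Real.norm_of_nonneg (by positivity)]; exact h.2.1 n)
  have hGi : Integrable (fun ζ => ∑' n, F n ζ) μ :=
    .of_bound (Measurable.tsum hFm).aestronglyMeasurable (4 * S) (hF.mono fun ζ h => by
      rw [Real.norm_of_nonneg (tsum_nonneg fun n => by positivity)]; exact h.2.2)
  have hsum' : Summable fun n => ∫ ζ, ‖F n ζ‖ ∂μ := by
    convert hsum using 4 with n ζ
    exact Real.norm_of_nonneg (by positivity)
  calc _ ≤ ∫ ζ, C ^ 2 * S * ∑' n, F n ζ ∂μ := by
        refine integral_mono_of_nonneg (.of_forall fun ζ => by positivity) (hGi.const_mul _) ?_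
        filter_upwards [hη, ae_all_iff.mpr hφψ, ae_all_iff.mpr hψw] with ζ ⟨hs, hS⟩ hφψ hψw
        refine (norm_tsum_sq_mul_div_sub_sq_le hC hs hφψ hψw).trans ?_
        gcongr
    _ = _ := by rw [integral_const_mul, ← integral_tsum_of_summable_integral_norm hFi hsum']

variable {τ : ℕ → Set Ω} {b : ℕ → ℝ} {a : ℕ → Ω → ℝ}

lemma summable_integral_mul_of_le_indicator_add (hτ : ∀ n, MeasurableSet (τ n))
    (hdisj : Pairwise (Function.onFun Disjoint τ)) (hb : Summable b)
    (ha0 : ∀ n, ∀ᵐ x ∂μ, 0 ≤ a n x) (ha : ∀ n, ∀ᵐ x ∂μ, a n x ≤ (τ n).indicator 1 x + b n)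
    {g : ℕ → Ω → ℝ} {M : ℝ} (hg : ∀ n, ∀ᵐ x ∂μ, 0 ≤ g n x ∧ g n x ≤ M) :
    Summable fun n => ∫ x, a n x * g n x ∂μ :=
  (((summable_measure_toReal hτ hdisj).add (hb.mul_right _)).mul_left M).of_nonneg_of_le
    (fun n => integral_nonneg_of_ae (by
      filter_upwards [ha0 n, hg n] with x ha0 hg using mul_nonneg ha0 hg.1))
    fun n => integral_mul_le_of_le_indicator_add (hτ n) (ha0 n) (ha n) (hg n)

lemma tendsto_tsum_integral_mul_of_le_indicator_add {T : Type*} {l : Filter T}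
    (hτ : ∀ n, MeasurableSet (τ n)) (hdisj : Pairwise (Function.onFun Disjoint τ))
    (hb : Summable b) (ha0 : ∀ n, ∀ᵐ x ∂μ, 0 ≤ a n x)
    (ha : ∀ n, ∀ᵐ x ∂μ, a n x ≤ (τ n).indicator 1 x + b n) {g : T → ℕ → Ω → ℝ} {M : ℝ}
    (hg : ∀ᶠ t in l, ∀ n, Integrable (g t n) μ ∧ ∀ᵐ x ∂μ, 0 ≤ g t n x ∧ g t n x ≤ M)
    (hlim : ∀ n, Tendsto (fun t => ∫ x, g t n x ∂μ) l (𝓝 0)) :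
    Tendsto (fun t => ∑' n, ∫ x, a n x * g t n x ∂μ) l (𝓝 0) := by
  have hnonneg : ∀ t n, (∀ᵐ x ∂μ, 0 ≤ g t n x ∧ g t n x ≤ M) → 0 ≤ ∫ x, a n x * g t n x ∂μ :=
    fun t n hg => integral_nonneg_of_ae (by
      filter_upwards [ha0 n, hg] with x ha0 hg using mul_nonneg ha0 hg.1)
  have hterm : ∀ n, Tendsto (fun t => ∫ x, a n x * g t n x ∂μ) l (𝓝 0) := by
    intro n
    refine squeeze_zero' (hg.mono fun t ht => hnonneg t n (ht n).2) (hg.mono fun t ht => ?_)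
      (by simpa using (hlim n).const_mul (1 + b n))
    rw [← integral_const_mul]
    refine integral_mono_of_nonneg ?_ ((ht n).1.const_mul _) ?_
    · filter_upwards [ha0 n, (ht n).2] with x ha0 hg using mul_nonneg ha0 hg.1
    · filter_upwards [ha n, (ht n).2] with x ha hg
      refine mul_le_mul_of_nonneg_right (ha.trans ?_) hg.1
      gcongr
      exact Set.indicator_le_self' (fun _ _ => zero_le_one) x
  simpa using tendsto_tsum_of_dominated_convergence
    (((summable_measure_toReal hτ hdisj).add (hb.mul_right (μ.real Set.univ))).mul_left M) hterm
    (hg.mono fun t ht n => by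
      rw [Real.norm_of_nonneg (hnonneg t n (ht n).2)]
      exact integral_mul_le_of_le_indicator_add (hτ n) (ha0 n) (ha n) (ht n).2)

end Integrals

theorem stmt_3_general {Ω : Type*} [MeasurableSpace Ω] (μ : Measure Ω) [IsFiniteMeasure μ]
    (τ : ℕ → Set Ω) (hτm : ∀ n, MeasurableSet (τ n))
    (hdisj : Pairwise (Function.onFun Disjoint τ))
    (C : ℝ) (hC : 0 < C) (ξ : ℕ → ℝ)
    (hξ2 : Summable fun n => ξ n ^ 2)
    (η φ ψ : ℕ → Ω → ℂ) (ψt : ℝ → ℕ → Ω → ℂ)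
    (hηm : ∀ n, Measurable (η n))
    (hψm : ∀ n, Measurable (ψ n)) (hψtm : ∀ t n, Measurable (ψt t n))
    (hη1 : ∀ n, ∀ᵐ ζ ∂μ, ζ ∈ τ n → ‖η n ζ‖ ≤ 1)
    (hη2 : ∀ n, ∀ᵐ ζ ∂μ, ζ ∉ τ n → ‖η n ζ‖ ≤ ξ n)
    (hφψ : ∀ n, ∀ᵐ ζ ∂μ, ‖φ n ζ‖ ≤ C * ‖ψ n ζ‖)
    (hψt : ∀ t, 0 < t → ∀ n, ∀ᵐ ζ ∂μ, ‖ψ n ζ‖ ≤ ‖ψt t n ζ‖)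
    (hconv : ∀ n, Tendsto (fun t => ∫ ζ, ‖ψ n ζ / ψt t n ζ - 1‖ ^ 2 ∂μ)
      (𝓝[>] (0 : ℝ)) (𝓝 0)) :
    (∃ B : ℝ, ∀ t, 0 < t →
        ∀ᵐ ζ ∂μ, ‖∑' n, (η n ζ) ^ 2 * (φ n ζ / ψt t n ζ)‖ ≤ B) ∧
      Tendsto (fun t => ∫ ζ, ‖(∑' n, (η n ζ) ^ 2 * (φ n ζ / ψt t n ζ)) -
          (∑' n, (η n ζ) ^ 2 * (φ n ζ / ψ n ζ))‖ ^ 2 ∂μ) (𝓝[>] (0 : ℝ)) (𝓝 0) := by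
  set S := 1 + ∑' n, ξ n ^ 2
  have hweight : ∀ n, ∀ᵐ ζ ∂μ, ‖η n ζ‖ ^ 2 ≤ (τ n).indicator 1 ζ + ξ n ^ 2 := fun n => by
    filter_upwards [hη1 n, hη2 n] with ζ h₁ h₂ using norm_sq_le_indicator_add_sq h₁ h₂
  have hS : ∀ᵐ ζ ∂μ, Summable (fun n => ‖η n ζ‖ ^ 2) ∧ ∑' n, ‖η n ζ‖ ^ 2 ≤ S := by
    filter_upwards [ae_all_iff.mpr hweight] with ζ hζ
    exact summable_and_tsum_le_of_le_indicator_add hdisj hξ2 (fun n => sq_nonneg _) hζ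
  have hρ : ∀ t, 0 < t → ∀ n, Integrable (fun ζ => ‖ψ n ζ / ψt t n ζ - 1‖ ^ 2) μ ∧
      ∀ᵐ ζ ∂μ, 0 ≤ ‖ψ n ζ / ψt t n ζ - 1‖ ^ 2 ∧ ‖ψ n ζ / ψt t n ζ - 1‖ ^ 2 ≤ 4 := by
    intro t ht n
    have hle := (hψt t ht n).mono fun ζ h => norm_div_sub_one_sq_le_four h
    refine ⟨.of_bound (Measurable.aestronglyMeasurable (by fun_prop)) 4 (hle.mono fun ζ h => ?_),
      hle.mono fun ζ h => ⟨by positivity, h⟩⟩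
    rwa [Real.norm_of_nonneg (by positivity)]
  have hηnonneg : ∀ n, ∀ᵐ ζ ∂μ, 0 ≤ ‖η n ζ‖ ^ 2 := fun n => .of_forall fun ζ => by positivity
  refine ⟨⟨C * S, fun t ht => ?_⟩, ?_⟩
  · filter_upwards [hS, ae_all_iff.mpr hφψ, ae_all_iff.mpr (hψt t ht)] with ζ ⟨hs, hle⟩ hφ hψ
    calc _ ≤ (∑' n, ‖η n ζ‖ ^ 2) * C :=
          norm_tsum_sq_mul_le hs fun n => norm_div_le_of_norm_le_mul hC.le (hφ n) (hψ n)
      _ ≤ C * S := by rw [mul_comm]; gcongr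
  · have hlim := tendsto_tsum_integral_mul_of_le_indicator_add (l := 𝓝[>] 0) hτm hdisj hξ2
      hηnonneg hweight (eventually_mem_nhdsWithin.mono hρ) hconv
    refine squeeze_zero' (.of_forall fun t => integral_nonneg fun ζ => by positivity)
      (eventually_mem_nhdsWithin.mono fun t ht => ?_) (by simpa using hlim.const_mul (C ^ 2 * S))
    exact integral_norm_tsum_sub_sq_le hC.le hηm hψm (hψtm t) hS hφψ (hψt t ht)
      (summable_integral_mul_of_le_indicator_add hτm hdisj hξ2 hηnonneg hweight
        fun n => (hρ t ht n).2)

/-- Proposition `propalphasigma`: with `σ` abstracted as a finite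
measure space `(Ω, μ)` partitioned into disjoint measurable sets `τ n`, weights
`η n` bounded by `1` on `τ n` and by `ξ n` off `τ n` with `∑ ξ n ² < ∞`,
`|φ n| ≤ C |ψ n|` a.e., and `ψ_{n,t}` with `|ψ n| ≤ |ψ_{n,t}|` a.e. and
`‖ψ n / ψ_{n,t} − 1‖_{L²} → 0` as `t → 0`, the functions
`α_t = ∑ η n ² φ n / ψ_{n,t}` are uniformly bounded in `L^∞` and
`‖α_t − α‖_{L²} → 0` where `α = ∑ η n ² φ n / ψ n`.
(Division by `0` is interpreted as `0`, consistent with `φ n = 0` where `ψ n = 0`.) -/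
theorem stmt_3 {Ω : Type*} [MeasurableSpace Ω] (μ : Measure Ω) [IsFiniteMeasure μ]
    (τ : ℕ → Set Ω) (hτm : ∀ n, MeasurableSet (τ n))
    (hdisj : Pairwise (Function.onFun Disjoint τ)) (hcover : (⋃ n, τ n) = Set.univ)
    (C : ℝ) (hC : 0 < C) (ξ : ℕ → ℝ) (hξ : ∀ n, 0 < ξ n)
    (hξ2 : Summable fun n => ξ n ^ 2)
    (η φ ψ : ℕ → Ω → ℂ) (ψt : ℝ → ℕ → Ω → ℂ)
    (hηm : ∀ n, Measurable (η n)) (hφm : ∀ n, Measurable (φ n))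
    (hψm : ∀ n, Measurable (ψ n)) (hψtm : ∀ t n, Measurable (ψt t n))
    (hη1 : ∀ n, ∀ᵐ ζ ∂μ, ζ ∈ τ n → ‖η n ζ‖ ≤ 1)
    (hη2 : ∀ n, ∀ᵐ ζ ∂μ, ζ ∉ τ n → ‖η n ζ‖ ≤ ξ n)
    (hφψ : ∀ n, ∀ᵐ ζ ∂μ, ‖φ n ζ‖ ≤ C * ‖ψ n ζ‖)
    (hψt : ∀ t, 0 < t → ∀ n, ∀ᵐ ζ ∂μ, ‖ψ n ζ‖ ≤ ‖ψt t n ζ‖)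
    (hconv : ∀ n, Tendsto (fun t => ∫ ζ, ‖ψ n ζ / ψt t n ζ - 1‖ ^ 2 ∂μ)
      (𝓝[>] (0 : ℝ)) (𝓝 0)) :
    (∃ B : ℝ, ∀ t, 0 < t →
        ∀ᵐ ζ ∂μ, ‖∑' n, (η n ζ) ^ 2 * (φ n ζ / ψt t n ζ)‖ ≤ B) ∧
      Tendsto (fun t => ∫ ζ, ‖(∑' n, (η n ζ) ^ 2 * (φ n ζ / ψt t n ζ)) -
          (∑' n, (η n ζ) ^ 2 * (φ n ζ / ψ n ζ))‖ ^ 2 ∂μ) (𝓝[>] (0 : ℝ)) (𝓝 0) :=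
  stmt_3_general μ τ hτm hdisj C hC ξ hξ2 η φ ψ ψt hηm hψm hψtm hη1 hη2 hφψ hψt hconv
end

section
/- Suppose T ∈ L(H) is an absolutely continuous polynomially bounded operator with polynomial bound C_T, σ ⊂ 𝕋 is measurable, X ∈ L(H, L²(σ)) satisfies X T = U_σ X, where U_σ is multiplication by the independent variable on L²(σ). Let x ∈ H and suppose ψ ∈ L²(𝕋) satisfies ‖φ(T)x‖ ≤ K C_T ‖x‖ (∫_𝕋 |φ|²|ψ|² dm)^{1/2} for all φ ∈ H^∞. Set f = Xx ∈ L²(σ). Then |f| ≤ ‖X‖ K C_T ‖x‖ |ψ| a.e. on σ. -/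
/-!
Put `M = ‖X‖ K C ‖x‖` and `f = X x`. For a measurable `τ ⊆ σ` and `b > 0`, test the bound with
`φ ∈ H^∞` of modulus `1` on `τ` and `b` off `τ`: since `X (φ(T) x) = φ f`,
`∫_τ |f|² ≤ ‖φ f‖² ≤ M² (∫_τ |ψ|² + b² ∫_{𝕋∖τ} |ψ|²)`, and `b → 0` gives
`∫_τ |f|² ≤ M² ∫_τ |ψ|²`. A measurable function whose integrals over all measurable sets are
dominated by those of another (possibly non-measurable) function is dominated by it a.e.
-/
open MeasureTheory Filter Topology
open scoped ENNReal

-- `ENNReal.ofReal L.toReal` is `L` when `L < ∞` and `0` otherwise: this is the form in which a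
-- bound through a Bochner integral, which vanishes for non-integrable integrands, arrives.
theorem ENNReal.le_mul_of_forall_le_mul_ofReal_toReal_add_sq_mul {a c Q P : ℝ≥0∞} (hc : c ≠ ∞)
    (h : ∀ b : ℝ, 0 < b → a ≤ c * ENNReal.ofReal (Q + ENNReal.ofReal b ^ 2 * P).toReal) :
    a ≤ c * Q := by
  by_cases hQP : Q + P = ∞
  · have ha : a ≤ 0 := by simpa [hQP] using h 1 one_pos
    exact ha.trans zero_le
  obtain ⟨hQ, hP⟩ := ENNReal.add_ne_top.1 hQP
  have hcont : Continuous fun b : ℝ => c * (Q + ENNReal.ofReal b ^ 2 * P) :=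
    (ENNReal.continuous_const_mul hc).comp <| continuous_const.add <|
      (ENNReal.continuous_mul_const hP).comp
        ((ENNReal.continuous_pow 2).comp ENNReal.continuous_ofReal)
  have hlim : Tendsto (fun b : ℝ => c * (Q + ENNReal.ofReal b ^ 2 * P)) (𝓝[>] 0)
      (𝓝 (c * Q)) := by
    simpa using (hcont.tendsto 0).mono_left nhdsWithin_le_nhds
  refine ge_of_tendsto hlim ?_
  filter_upwards [self_mem_nhdsWithin] with b hb
  simpa [ENNReal.ofReal_toReal, hQ, hP, ENNReal.mul_eq_top] using h b hb

namespace MeasureTheory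

variable {Ω : Type*} [MeasurableSpace Ω] {μ : Measure Ω}

theorem ae_restrict_of_forall_mem_of_measurableSet_setOf {s : Set Ω} {p : Ω → Prop}
    (hp : MeasurableSet {x | p x}) (h : ∀ x ∈ s, p x) : ∀ᵐ x ∂μ.restrict s, p x := by
  rw [ae_iff, show {x | ¬p x} = {x | p x}ᶜ from rfl, Measure.restrict_apply hp.compl]
  convert measure_empty (μ := μ)
  exact Set.eq_empty_of_forall_notMem fun x hx => hx.1 (h x hx.2)

theorem setLIntegral_le_mul_of_forall_le {s : Set Ω} {G : Ω → ℝ≥0∞} {c : ℝ≥0∞}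
    (h : ∀ x ∈ s, G x ≤ c) : ∫⁻ x in s, G x ∂μ ≤ c * μ s := by
  obtain ⟨g, hg, hgG, hGg⟩ := exists_measurable_le_lintegral_eq (μ.restrict s) G
  calc ∫⁻ x in s, G x ∂μ = ∫⁻ x in s, g x ∂μ := hGg
    _ ≤ ∫⁻ _ in s, c ∂μ := lintegral_mono_ae <|
        ae_restrict_of_forall_mem_of_measurableSet_setOf (measurableSet_le hg measurable_const)
          fun x hx => (hgG x).trans (h x hx)
    _ = c * μ s := setLIntegral_const s c

theorem ae_le_of_forall_setLIntegral_le_of_measurable [IsFiniteMeasure μ] {F G : Ω → ℝ≥0∞}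
    (hF : Measurable F) (h : ∀ s, MeasurableSet s → ∫⁻ x in s, F x ∂μ ≤ ∫⁻ x in s, G x ∂μ) :
    F ≤ᵐ[μ] G := by
  have hcover : {x | ¬F x ≤ G x} ⊆
      ⋃ q : ℚ, {x | G x < ENNReal.ofReal q ∧ ENNReal.ofReal q < F x} := fun x hx => by
    obtain ⟨q, -, hGq, hqF⟩ := ENNReal.lt_iff_exists_rat_btwn.1 (not_le.1 hx)
    exact Set.mem_iUnion.2 ⟨q, hGq, hqF⟩
  refine measure_mono_null hcover (measure_iUnion_null fun q => ?_)
  set S := {x | G x < ENNReal.ofReal q ∧ ENNReal.ofReal q < F x}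
  by_contra hS
  have hSτ := h (toMeasurable μ S) (measurableSet_toMeasurable μ S)
  rw [Measure.restrict_toMeasurable (measure_ne_top μ S)] at hSτ
  refine hSτ.not_gt ?_
  calc ∫⁻ x in S, G x ∂μ ≤ ENNReal.ofReal q * μ S :=
        setLIntegral_le_mul_of_forall_le fun x hx => hx.1.le
    _ = ∫⁻ _ in S, ENNReal.ofReal q ∂μ := (setLIntegral_const S _).symm
    _ < ∫⁻ x in S, F x ∂μ :=
        lintegral_strict_mono (Measure.restrict_eq_zero.not.2 hS) hF.aemeasurable
          (by simp [ENNReal.mul_eq_top])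
          (ae_restrict_of_forall_mem_of_measurableSet_setOf
            (measurableSet_lt measurable_const hF) fun x hx => hx.2)

theorem Lp.enorm_sq_eq_lintegral {E : Type*} [NormedAddCommGroup E] (g : Lp E 2 μ) :
    ‖g‖ₑ ^ 2 = ∫⁻ x, ‖g x‖ₑ ^ 2 ∂μ := by
  simpa [Lp.enorm_def] using eLpNorm_nnreal_pow_eq_lintegral (f := g) (p := 2) (μ := μ) two_ne_zero

theorem lintegral_enorm_sq_mul_le_of_norm_le {ν : Measure Ω} {f g : Lp ℂ 2 ν} {φ : Ω → ℂ}
    (hg : ⇑g =ᵐ[ν] fun ζ => φ ζ * f ζ) {R : ℝ} (hR : ‖g‖ ≤ R) :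
    ∫⁻ ζ, ‖φ ζ‖ₑ ^ 2 * ‖f ζ‖ₑ ^ 2 ∂ν ≤ ENNReal.ofReal R ^ 2 := by
  calc ∫⁻ ζ, ‖φ ζ‖ₑ ^ 2 * ‖f ζ‖ₑ ^ 2 ∂ν = ‖g‖ₑ ^ 2 := by
        rw [Lp.enorm_sq_eq_lintegral]
        refine lintegral_congr_ae ?_
        filter_upwards [hg] with ζ hζ
        rw [hζ, enorm_mul, mul_pow]
    _ ≤ ENNReal.ofReal R ^ 2 := by
        rw [← ofReal_norm]
        gcongr

theorem integral_le_toReal_lintegral (g : Ω → ℝ) :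
    ∫ ζ, g ζ ∂μ ≤ (∫⁻ ζ, ‖g ζ‖ₑ ∂μ).toReal :=
  (le_abs_self _).trans <|
    (norm_integral_le_lintegral_norm g).trans_eq (by simp [Real.enorm_eq_ofReal_abs])

theorem setLIntegral_le_mul_of_forall_lintegral_enorm_sq_mul_le {σ : Set Ω}
    (hσ : MeasurableSet σ) {Hinf : Set (Ω → ℂ)}
    (hmod : ∀ τ : Set Ω, MeasurableSet τ → ∀ b : ℝ, 0 < b →
      ∃ φ ∈ Hinf, (∀ᵐ ζ ∂μ, ζ ∈ τ → ‖φ ζ‖ = 1) ∧ (∀ᵐ ζ ∂μ, ζ ∉ τ → ‖φ ζ‖ = b))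
    {F G : Ω → ℝ≥0∞} {c : ℝ≥0∞} (hc : c ≠ ∞)
    (hbound : ∀ φ ∈ Hinf, ∫⁻ ζ in σ, ‖φ ζ‖ₑ ^ 2 * F ζ ∂μ ≤
      c * ENNReal.ofReal (∫⁻ ζ, ‖φ ζ‖ₑ ^ 2 * G ζ ∂μ).toReal)
    {τ : Set Ω} (hτ : MeasurableSet τ) :
    ∫⁻ ζ in τ, F ζ ∂μ.restrict σ ≤ c * ∫⁻ ζ in τ, G ζ ∂μ.restrict σ := by
  rw [Measure.restrict_restrict hτ]
  refine ENNReal.le_mul_of_forall_le_mul_ofReal_toReal_add_sq_mul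
    (P := ∫⁻ ζ in (τ ∩ σ)ᶜ, G ζ ∂μ) hc fun b hb => ?_
  obtain ⟨φ, hφ, hφ_in, hφ_out⟩ := hmod (τ ∩ σ) (hτ.inter hσ) b hb
  have hφG : ∫⁻ ζ, ‖φ ζ‖ₑ ^ 2 * G ζ ∂μ =
      ∫⁻ ζ in τ ∩ σ, G ζ ∂μ + ENNReal.ofReal b ^ 2 * ∫⁻ ζ in (τ ∩ σ)ᶜ, G ζ ∂μ := by
    rw [← lintegral_add_compl _ (hτ.inter hσ), ← lintegral_const_mul' _ _ (by simp)]
    congr 1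
    · refine setLIntegral_congr_fun_ae (hτ.inter hσ) ?_
      filter_upwards [hφ_in] with ζ hζ hζτ
      simp [← ofReal_norm, hζ hζτ]
    · refine setLIntegral_congr_fun_ae (hτ.inter hσ).compl ?_
      filter_upwards [hφ_out] with ζ hζ hζτ
      rw [← ofReal_norm, hζ hζτ]
  calc ∫⁻ ζ in τ ∩ σ, F ζ ∂μ = ∫⁻ ζ in τ ∩ σ, ‖φ ζ‖ₑ ^ 2 * F ζ ∂μ := by
        refine setLIntegral_congr_fun_ae (hτ.inter hσ) ?_
        filter_upwards [hφ_in] with ζ hζ hζτ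
        simp [← ofReal_norm, hζ hζτ]
    _ ≤ ∫⁻ ζ in σ, ‖φ ζ‖ₑ ^ 2 * F ζ ∂μ := lintegral_mono_set Set.inter_subset_right
    _ ≤ _ := hφG ▸ hbound φ hφ

end MeasureTheory

/-- Lemma `lemfpsi`: `T` is an a.c. polynomially bounded operator
with polynomial bound `C`, abstracted via its `H^∞` calculus `Φ` on a probability
space `(Ω, μ)` (the circle); `Hinf` contains, for every measurable `τ` and
`a, b > 0`, a function of modulus `a` on `τ` and `b` off `τ`.
`X : H → L²(σ)` intertwines `T` with `U_σ`, so that `X(φ(T)x) = φ·(Xx)` a.e. on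
`σ` for `φ ∈ H^∞`.  If `‖φ(T)x‖ ≤ K C ‖x‖ (∫ |φ|²|ψ|² dm)^{1/2}` for all
`φ ∈ H^∞`, then `f = Xx` satisfies `|f| ≤ ‖X‖ K C ‖x‖ |ψ|` a.e. on `σ`. -/
theorem stmt_7 {H : Type*} [NormedAddCommGroup H] [InnerProductSpace ℂ H]
    {Ω : Type*} [MeasurableSpace Ω] (μ : Measure Ω) [IsProbabilityMeasure μ]
    (σ : Set Ω) (hσ : MeasurableSet σ)
    (Hinf : Set (Ω → ℂ)) (Φ : (Ω → ℂ) → H →L[ℂ] H)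
    (hmod : ∀ τ : Set Ω, MeasurableSet τ → ∀ a b : ℝ, 0 < a → 0 < b →
      ∃ φ ∈ Hinf, (∀ᵐ ζ ∂μ, ζ ∈ τ → ‖φ ζ‖ = a) ∧ (∀ᵐ ζ ∂μ, ζ ∉ τ → ‖φ ζ‖ = b))
    (K C : ℝ) (hK : 0 < K) (hC : 0 < C)
    (X : H →L[ℂ] Lp ℂ 2 (μ.restrict σ))
    (x : H) (ψ : Ω → ℂ)
    (hbound : ∀ φ ∈ Hinf,
      ‖(Φ φ) x‖ ≤ K * C * ‖x‖ * Real.sqrt (∫ ζ, ‖φ ζ‖ ^ 2 * ‖ψ ζ‖ ^ 2 ∂μ))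
    (hint : ∀ φ ∈ Hinf,
      ⇑(X ((Φ φ) x)) =ᵐ[μ.restrict σ] fun ζ => φ ζ * ⇑(X x) ζ) :
    ∀ᵐ ζ ∂(μ.restrict σ), ‖⇑(X x) ζ‖ ≤ ‖X‖ * K * C * ‖x‖ * ‖ψ ζ‖ := by
  set M := ‖X‖ * K * C * ‖x‖
  have hM : 0 ≤ M := by positivity
  have hφ : ∀ φ ∈ Hinf, ∫⁻ ζ in σ, ‖φ ζ‖ₑ ^ 2 * ‖X x ζ‖ₑ ^ 2 ∂μ ≤
      ENNReal.ofReal M ^ 2 * ENNReal.ofReal (∫⁻ ζ, ‖φ ζ‖ₑ ^ 2 * ‖ψ ζ‖ₑ ^ 2 ∂μ).toReal := by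
    intro φ hφ
    set I := ∫ ζ, ‖φ ζ‖ ^ 2 * ‖ψ ζ‖ ^ 2 ∂μ
    have hXφ : ‖X (Φ φ x)‖ ≤ M * √I :=
      calc ‖X (Φ φ x)‖ ≤ ‖X‖ * (K * C * ‖x‖ * √I) :=
            X.le_of_opNorm_le_of_le le_rfl (hbound φ hφ)
        _ = M * √I := by ring
    refine (lintegral_enorm_sq_mul_le_of_norm_le (hint φ hφ) hXφ).trans ?_
    rw [ENNReal.ofReal_mul hM, mul_pow, ← ENNReal.ofReal_pow (Real.sqrt_nonneg _),
      Real.sq_sqrt (integral_nonneg fun ζ => by positivity)]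
    gcongr
    exact (integral_le_toReal_lintegral _).trans_eq
      (by simp only [enorm_mul, enorm_pow, enorm_norm])
  have hsq : (fun ζ => ‖X x ζ‖ₑ ^ 2) ≤ᵐ[μ.restrict σ]
      fun ζ => ENNReal.ofReal M ^ 2 * ‖ψ ζ‖ₑ ^ 2 := by
    refine ae_le_of_forall_setLIntegral_le_of_measurable
      ((Lp.stronglyMeasurable (X x)).measurable.enorm.pow_const 2) fun τ hτ => ?_
    rw [lintegral_const_mul' _ _ (by simp)]
    exact setLIntegral_le_mul_of_forall_lintegral_enorm_sq_mul_le hσ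
      (fun τ hτ b hb => hmod τ hτ 1 b one_pos hb) (by simp) hφ hτ
  filter_upwards [hsq] with ζ hζ
  rwa [← mul_pow, ← ofReal_norm, ← ofReal_norm, ← ENNReal.ofReal_mul hM,
    ENNReal.pow_le_pow_left_iff two_ne_zero,
    ENNReal.ofReal_le_ofReal_iff (by positivity)] at hζ
end

section
/- Let f, ψ ∈ L²(𝕋, m) with ψ real-valued nonnegative. Suppose that for every measurable τ ⊂ 𝕋 and every a, b > 0 one has ∫_𝕋 |φ|²|f|² dm ≤ M² ∫_𝕋 |φ|²ψ² dm for all φ ∈ H^∞ (where M > 0 is fixed). Then |f| ≤ M ψ a.e. on 𝕋. -/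
/-!
Testing the inequality against `φ` with `|φ| = 1` on a measurable set `E` and `|φ| = b` off `E`
and letting `b → 0` localizes it to `∫_E |f|² ≤ M² ∫_E ψ²`. As `E` is arbitrary,
`|f|² ≤ M² ψ²` a.e., and taking square roots is allowed since `Mψ ≥ 0`.
-/

open MeasureTheory Filter Topology

section

variable {Ω : Type*} [MeasurableSpace Ω] {μ : Measure Ω}

theorem integral_norm_sq_mul_eq_of_norm_ae_eq {E : Set Ω} (hE : MeasurableSet E) {φ : Ω → ℂ}
    {a b : ℝ} (hφE : ∀ᵐ ζ ∂μ, ζ ∈ E → ‖φ ζ‖ = a) (hφEc : ∀ᵐ ζ ∂μ, ζ ∉ E → ‖φ ζ‖ = b)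
    {g : Ω → ℝ} (hg : Integrable g μ) :
    ∫ ζ, ‖φ ζ‖ ^ 2 * g ζ ∂μ = a ^ 2 * ∫ ζ in E, g ζ ∂μ + b ^ 2 * ∫ ζ in Eᶜ, g ζ ∂μ := by
  have hsplit : (fun ζ => ‖φ ζ‖ ^ 2 * g ζ)
      =ᵐ[μ] fun ζ =>
        E.indicator (fun ζ => a ^ 2 * g ζ) ζ + Eᶜ.indicator (fun ζ => b ^ 2 * g ζ) ζ := by
    filter_upwards [hφE, hφEc] with ζ hζE hζEc
    by_cases hζ : ζ ∈ E <;> simp [hζ, hζE, hζEc]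
  rw [integral_congr_ae hsplit, integral_add ((hg.const_mul _).indicator hE)
      ((hg.const_mul _).indicator hE.compl), integral_indicator hE, integral_indicator hE.compl,
    integral_const_mul, integral_const_mul]

theorem setIntegral_le_of_weighted_integral_le {E : Set Ω} (hE : MeasurableSet E) {F G : Ω → ℝ}
    (hF : Integrable F μ) (hG : Integrable G μ)
    (hweight : ∀ b : ℝ, 0 < b → ∃ φ : Ω → ℂ, (∀ᵐ ζ ∂μ, ζ ∈ E → ‖φ ζ‖ = 1) ∧
      (∀ᵐ ζ ∂μ, ζ ∉ E → ‖φ ζ‖ = b) ∧ ∫ ζ, ‖φ ζ‖ ^ 2 * F ζ ∂μ ≤ ∫ ζ, ‖φ ζ‖ ^ 2 * G ζ ∂μ) :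
    ∫ ζ in E, F ζ ∂μ ≤ ∫ ζ in E, G ζ ∂μ := by
  have hlim (c d : ℝ) : Tendsto (fun b : ℝ => c + b ^ 2 * d) (𝓝[>] 0) (𝓝 c) := by
    have hcont : Continuous fun b : ℝ => c + b ^ 2 * d := by fun_prop
    simpa using (hcont.tendsto 0).mono_left nhdsWithin_le_nhds
  refine le_of_tendsto_of_tendsto (hlim _ (∫ ζ in Eᶜ, F ζ ∂μ)) (hlim _ (∫ ζ in Eᶜ, G ζ ∂μ)) ?_
  filter_upwards [self_mem_nhdsWithin] with b hb
  obtain ⟨φ, hφE, hφEc, hφ⟩ := hweight b hb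
  simpa [integral_norm_sq_mul_eq_of_norm_ae_eq hE hφE hφEc, hF, hG] using hφ

theorem ae_le_of_weighted_integral_le {F G : Ω → ℝ} (hF : Integrable F μ) (hG : Integrable G μ)
    (hweight : ∀ E : Set Ω, MeasurableSet E → ∀ b : ℝ, 0 < b → ∃ φ : Ω → ℂ,
      (∀ᵐ ζ ∂μ, ζ ∈ E → ‖φ ζ‖ = 1) ∧ (∀ᵐ ζ ∂μ, ζ ∉ E → ‖φ ζ‖ = b) ∧
      ∫ ζ, ‖φ ζ‖ ^ 2 * F ζ ∂μ ≤ ∫ ζ, ‖φ ζ‖ ^ 2 * G ζ ∂μ) :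
    F ≤ᵐ[μ] G :=
  ae_le_of_forall_setIntegral_le hF hG fun E hE _ =>
    setIntegral_le_of_weighted_integral_le hE hF hG (hweight E hE)

end

theorem stmt_8_general {Ω : Type*} [MeasurableSpace Ω] (μ : Measure Ω)
    (Hinf : Set (Ω → ℂ))
    (hmod : ∀ τ : Set Ω, MeasurableSet τ → ∀ a b : ℝ, 0 < a → 0 < b →
      ∃ φ ∈ Hinf, (∀ᵐ ζ ∂μ, ζ ∈ τ → ‖φ ζ‖ = a) ∧ (∀ᵐ ζ ∂μ, ζ ∉ τ → ‖φ ζ‖ = b))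
    (f : Ω → ℂ) (ψ : Ω → ℝ) (hψ0 : ∀ ζ, 0 ≤ ψ ζ)
    (hf2 : MemLp f 2 μ) (hψ2 : MemLp ψ 2 μ)
    (M : ℝ) (hM : 0 < M)
    (hineq : ∀ φ ∈ Hinf,
      ∫ ζ, ‖φ ζ‖ ^ 2 * ‖f ζ‖ ^ 2 ∂μ ≤ M ^ 2 * ∫ ζ, ‖φ ζ‖ ^ 2 * (ψ ζ) ^ 2 ∂μ) :
    ∀ᵐ ζ ∂μ, ‖f ζ‖ ≤ M * ψ ζ := by
  have hF : Integrable (fun ζ => ‖f ζ‖ ^ 2) μ := (memLp_two_iff_integrable_sq_norm hf2.1).1 hf2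
  have hG : Integrable (fun ζ => (M * ψ ζ) ^ 2) μ := (hψ2.const_mul M).integrable_sq
  have hsq : (fun ζ => ‖f ζ‖ ^ 2) ≤ᵐ[μ] fun ζ => (M * ψ ζ) ^ 2 :=
    ae_le_of_weighted_integral_le hF hG fun E hE b hb => by
      obtain ⟨φ, hφH, hφE, hφEc⟩ := hmod E hE 1 b one_pos hb
      refine ⟨φ, hφE, hφEc, ?_⟩
      simpa only [mul_pow, mul_left_comm _ (M ^ 2), integral_const_mul] using hineq φ hφH
  filter_upwards [hsq] with ζ hζ
  exact (pow_le_pow_iff_left₀ (norm_nonneg _) (mul_nonneg hM.le (hψ0 ζ)) two_ne_zero).1 hζ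

/-- with the circle abstracted as a probability space `(Ω, μ)` and
`Hinf` an abstract `H^∞` containing, for every measurable `τ ⊂ Ω` and `a, b > 0`,
a function with modulus `a` a.e. on `τ` and `b` a.e. off `τ`: if `f ∈ L²`,
`ψ ∈ L²` is nonnegative and `∫ |φ|²|f|² dm ≤ M² ∫ |φ|²ψ² dm` for every
`φ ∈ Hinf`, then `|f| ≤ M ψ` a.e. -/
theorem stmt_8 {Ω : Type*} [MeasurableSpace Ω] (μ : Measure Ω) [IsProbabilityMeasure μ]
    (Hinf : Set (Ω → ℂ))
    (hmod : ∀ τ : Set Ω, MeasurableSet τ → ∀ a b : ℝ, 0 < a → 0 < b →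
      ∃ φ ∈ Hinf, (∀ᵐ ζ ∂μ, ζ ∈ τ → ‖φ ζ‖ = a) ∧ (∀ᵐ ζ ∂μ, ζ ∉ τ → ‖φ ζ‖ = b))
    (f : Ω → ℂ) (ψ : Ω → ℝ) (hψ0 : ∀ ζ, 0 ≤ ψ ζ)
    (hfm : Measurable f) (hψm : Measurable ψ)
    (hf2 : MemLp f 2 μ) (hψ2 : MemLp ψ 2 μ)
    (M : ℝ) (hM : 0 < M)
    (hineq : ∀ φ ∈ Hinf,
      ∫ ζ, ‖φ ζ‖ ^ 2 * ‖f ζ‖ ^ 2 ∂μ ≤ M ^ 2 * ∫ ζ, ‖φ ζ‖ ^ 2 * (ψ ζ) ^ 2 ∂μ) :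
    ∀ᵐ ζ ∂μ, ‖f ζ‖ ≤ M * ψ ζ :=
  stmt_8_general μ Hinf hmod f ψ hψ0 hf2 hψ2 M hM hineq
end

section
/- Suppose T ∈ L(H) is an absolutely continuous polynomially bounded operator, X ∈ L(H, H²) with X T = S X, Y ∈ L(H², H) with Y S = T Y, and both X and Y have dense range. Then ker X = {0} and ker Y = {0}. -/
/-!
`X Y` commutes with the shift and has dense range, so `X Y = g(S)` for an outer `g`.
Pushing `X Y = g(S)` through the intertwining `Y S = T Y` gives `Y X Y = g(T) Y`, and since
`Y` has dense range, `Y X = g(T)`. Both `g(S)` and `g(T)` are injective, hence so are the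
right factors `Y` of `X Y` and `X` of `Y X`.
-/

namespace ContinuousLinearMap

variable {R M N P : Type*} [Semiring R]
  [TopologicalSpace M] [AddCommMonoid M] [Module R M]
  [TopologicalSpace N] [AddCommMonoid N] [Module R N]
  [TopologicalSpace P] [AddCommMonoid P] [Module R P]

theorem comp_comm_of_intertwines {T : M →L[R] M} {S : N →L[R] N} {X : M →L[R] N}
    {Y : N →L[R] M} (hX : X.comp T = S.comp X) (hY : Y.comp S = T.comp Y) :
    (X.comp Y).comp S = S.comp (X.comp Y) := by
  rw [comp_assoc, hY, ← comp_assoc, hX, comp_assoc]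

theorem eq_of_comp_eq_of_denseRange [T2Space P] {Y : N →L[R] M} (hY : DenseRange Y)
    {A B : M →L[R] P} (h : A.comp Y = B.comp Y) : A = B :=
  coe_injective <| LinearMap.coe_injective <|
    hY.equalizer A.continuous B.continuous (congrArg DFunLike.coe h)

theorem ker_eq_bot_of_comp_eq {A : N →L[R] P} {B : M →L[R] N} {C : M →L[R] P}
    (h : A.comp B = C) (hC : LinearMap.ker (C : M →ₗ[R] P) = ⊥) :
    LinearMap.ker (B : M →ₗ[R] N) = ⊥ :=
  eq_bot_iff.2 <| hC ▸ h ▸ LinearMap.ker_le_ker_comp (B : M →ₗ[R] N) (A : N →ₗ[R] P)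

end ContinuousLinearMap

open ContinuousLinearMap in
/-- Lemma `lemquasi`: `T` is an a.c. polynomially bounded operator
and `S` the unilateral shift on `H²`; their relevant structure is abstracted: a
type `G` of (outer) functions with calculi `ΦS`, `ΦT`, such that every operator
commuting with `S` with dense range is `ΦS g` for some `g` (commutant of the
shift), `ΦS g` and `ΦT g` are injective (Mlak's theorem for outer functions), and
any intertwining `Y S = T Y` also intertwines the calculi.  If `X T = S X`,
`Y S = T Y` and `X, Y` have dense range, then `ker X = {0}` and `ker Y = {0}`. -/
theorem stmt_9 {H H2 : Type*} [NormedAddCommGroup H] [InnerProductSpace ℂ H]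
    [NormedAddCommGroup H2] [InnerProductSpace ℂ H2]
    (T : H →L[ℂ] H) (S : H2 →L[ℂ] H2)
    (G : Type*) (ΦS : G → H2 →L[ℂ] H2) (ΦT : G → H →L[ℂ] H)
    (hcommutant : ∀ A : H2 →L[ℂ] H2, A.comp S = S.comp A → DenseRange A →
      ∃ g : G, A = ΦS g)
    (hkerS : ∀ g : G, LinearMap.ker (ΦS g : H2 →ₗ[ℂ] H2) = ⊥)
    (hkerT : ∀ g : G, LinearMap.ker (ΦT g : H →ₗ[ℂ] H) = ⊥)
    (hintertw : ∀ (g : G) (Y : H2 →L[ℂ] H), Y.comp S = T.comp Y →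
      Y.comp (ΦS g) = (ΦT g).comp Y)
    (X : H →L[ℂ] H2) (Y : H2 →L[ℂ] H)
    (hX : X.comp T = S.comp X) (hY : Y.comp S = T.comp Y)
    (hXd : DenseRange X) (hYd : DenseRange Y) :
    LinearMap.ker (X : H →ₗ[ℂ] H2) = ⊥ ∧ LinearMap.ker (Y : H2 →ₗ[ℂ] H) = ⊥ := by
  obtain ⟨g, hXY⟩ :=
    hcommutant _ (comp_comm_of_intertwines hX hY) (hXd.comp hYd X.continuous)
  have hYX : Y.comp X = ΦT g :=
    eq_of_comp_eq_of_denseRange hYd (by rw [comp_assoc, hXY, hintertw g Y hY])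
  exact ⟨ker_eq_bot_of_comp_eq hYX (hkerT g), ker_eq_bot_of_comp_eq hXY (hkerS g)⟩
end

section
/- Let g₁, g₂ be measurable functions on 𝕋 and τ ⊂ 𝕋 measurable with g₂ supported in τ. Define θ₁ = g₁/(|g₁|²+|g₂|²)^{1/2} and θ₂ = g₂/(|g₁|²+|g₂|²)^{1/2} on τ (assuming |g₁|²+|g₂|² > 0 a.e.), and let E₀ = {θ₁h ⊕ (−θ₂h) : h ∈ L²(τ)} ⊂ L²(τ) ⊕ L²(𝕋). Define J : L²(𝕋) → (L²(τ) ⊕ L²(𝕋)) ⊖ E₀ by Jh = conj(θ₂)·h|_τ ⊕ (conj(θ₁)·h|_τ + h|_{𝕋∖τ}). Then J is a well-defined unitary operator, J intertwines U_𝕋 with (U_τ ⊕ U_𝕋)|_{(L²(τ)⊕L²(𝕋))⊖E₀}, and L²(τ) ⊕ L²(𝕋) = J L²(𝕋) ⊕ E₀. -/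
/-!
Both components of `J` are multiplication operators: by `conj θ₂` on `L²(τ)`, and on `L²(Ω)` by
the function equal to `conj θ₁` on `τ` and to `1` off `τ`. Everything then reduces to pointwise
identities. Since `|θ₁|² + |θ₂|² = 1` on `τ`, the squared norms add up to `‖h‖²`; orthogonality
to `E₀` is the cancellation `θ₂ θ₁ - θ₁ θ₂ = 0` on `τ`; and `p = J h + q` with
`h = θ₂ p₁ + θ₁ p₂` on `τ`, `h = p₂` off `τ`, and `q ∈ E₀` generated by
`w = conj θ₁ p₁ - conj θ₂ p₂`.
-/

open MeasureTheory
open scoped InnerProductSpace ENNReal ComplexConjugate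

namespace MeasureTheory.Lp

variable {α : Type*} [MeasurableSpace α] {ν : Measure α}

noncomputable def mulOp {p : ℝ≥0∞} [Fact (1 ≤ p)] (c : α → ℂ) (hc : MemLp c ∞ ν) :
    Lp ℂ p ν →L[ℂ] Lp ℂ p ν :=
  (ContinuousLinearMap.mul ℂ ℂ).holderL ν ∞ p p (hc.toLp c)

lemma coeFn_mulOp {p : ℝ≥0∞} [Fact (1 ≤ p)] (c : α → ℂ) (hc : MemLp c ∞ ν) (f : Lp ℂ p ν) :
    mulOp c hc f =ᵐ[ν] fun x => c x * f x := by
  filter_upwards [ContinuousLinearMap.coeFn_holder (ContinuousLinearMap.mul ℂ ℂ) (r := p)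
    (hc.toLp c) f, hc.coeFn_toLp] with x hx hc
  simp [mulOp, hx, hc]

lemma norm_sq_eq_integral (f : Lp ℂ 2 ν) : ‖f‖ ^ 2 = ∫ x, ‖f x‖ ^ 2 ∂ν := by
  rw [← inner_self_eq_norm_sq (𝕜 := ℂ), L2.inner_def, ← integral_re (L2.integrable_inner f f)]
  simp only [inner_self_eq_norm_sq]

lemma integrable_norm_sq (f : Lp ℂ 2 ν) : Integrable (fun x => ‖f x‖ ^ 2) ν :=
  (memLp_two_iff_integrable_sq_norm (Lp.aestronglyMeasurable f)).1 (Lp.memLp f)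

end MeasureTheory.Lp

open MeasureTheory.Lp

lemma norm_le_one_of_norm_sq_add_norm_sq_eq_one {a b : ℂ} (h : ‖a‖ ^ 2 + ‖b‖ ^ 2 = 1) :
    ‖a‖ ≤ 1 ∧ ‖b‖ ≤ 1 :=
  ⟨by nlinarith [norm_nonneg a, norm_nonneg b], by nlinarith [norm_nonneg a, norm_nonneg b]⟩

lemma mul_conj_add_mul_conj_eq_one {a b : ℂ} (h : ‖a‖ ^ 2 + ‖b‖ ^ 2 = 1) :
    a * conj a + b * conj b = 1 := by
  rw [Complex.mul_conj, Complex.mul_conj, Complex.normSq_eq_norm_sq, Complex.normSq_eq_norm_sq,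
    ← Complex.ofReal_add, h, Complex.ofReal_one]

lemma norm_div_sqrt_sq_add_norm_div_sqrt_sq {a b : ℂ} (h : a ≠ 0 ∨ b ≠ 0) :
    ‖a / (Real.sqrt (‖a‖ ^ 2 + ‖b‖ ^ 2) : ℂ)‖ ^ 2 + ‖b / (Real.sqrt (‖a‖ ^ 2 + ‖b‖ ^ 2) : ℂ)‖ ^ 2
      = 1 := by
  have hpos : 0 < ‖a‖ ^ 2 + ‖b‖ ^ 2 := by
    rcases h with h | h
    · have := norm_pos_iff.2 h; positivity
    · have := norm_pos_iff.2 h; positivity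
  simp only [norm_div, Complex.norm_real, Real.norm_of_nonneg (Real.sqrt_nonneg _), div_pow,
    Real.sq_sqrt hpos.le]
  rw [← add_div, div_self hpos.ne']

section ConjOrOne

variable {Ω : Type*} {τ : Set Ω} {θ₁ : Ω → ℂ}

variable (τ θ₁) in
noncomputable def conjOrOne : Ω → ℂ := τ.indicator (fun ζ => conj (θ₁ ζ)) + τᶜ.indicator 1

lemma conjOrOne_of_mem {ζ : Ω} (hζ : ζ ∈ τ) : conjOrOne τ θ₁ ζ = conj (θ₁ ζ) := by
  simp [conjOrOne, hζ]

lemma conjOrOne_of_notMem {ζ : Ω} (hζ : ζ ∉ τ) : conjOrOne τ θ₁ ζ = 1 := by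
  simp [conjOrOne, hζ]

lemma conjOrOne_mul (f : Ω → ℂ) (ζ : Ω) :
    conjOrOne τ θ₁ ζ * f ζ = τ.indicator (fun ζ' => conj (θ₁ ζ') * f ζ') ζ + τᶜ.indicator f ζ := by
  by_cases hζ : ζ ∈ τ
  · simp [conjOrOne_of_mem hζ, hζ]
  · simp [conjOrOne_of_notMem hζ, hζ]

end ConjOrOne

section Decomposition

variable {Ω : Type*} [MeasurableSpace Ω] {μ : Measure Ω} {τ : Set Ω} {θ₁ θ₂ : Ω → ℂ}

lemma memLp_top_of_norm_sq_add_norm_sq_eq_one (hθ₁ : AEStronglyMeasurable θ₁ μ)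
    (hθ₂ : AEStronglyMeasurable θ₂ μ) (hunit : ∀ᵐ ζ ∂μ, ‖θ₁ ζ‖ ^ 2 + ‖θ₂ ζ‖ ^ 2 = 1) :
    MemLp θ₁ ∞ μ ∧ MemLp θ₂ ∞ μ := by
  have hle := hunit.mono fun _ => norm_le_one_of_norm_sq_add_norm_sq_eq_one
  exact ⟨memLp_top_of_bound hθ₁ 1 (hle.mono fun _ => And.left),
    memLp_top_of_bound hθ₂ 1 (hle.mono fun _ => And.right)⟩

variable (μ τ θ₁ θ₂) in
def thetaRange : Set (Lp ℂ 2 (μ.restrict τ) × Lp ℂ 2 μ) :=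
  {p | ∃ h : Ω → ℂ, MemLp h 2 (μ.restrict τ) ∧
    (⇑p.1 =ᵐ[μ.restrict τ] fun ζ => θ₁ ζ * h ζ) ∧
    (⇑p.2 =ᵐ[μ] τ.indicator fun ζ => -(θ₂ ζ) * h ζ)}

lemma exists_clm_ae_eq_conj_mul (hτ : MeasurableSet τ)
    (hθ₁ : AEStronglyMeasurable θ₁ (μ.restrict τ)) (hθ₂ : AEStronglyMeasurable θ₂ (μ.restrict τ))
    (hunit : ∀ᵐ ζ ∂μ.restrict τ, ‖θ₁ ζ‖ ^ 2 + ‖θ₂ ζ‖ ^ 2 = 1) :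
    ∃ J : Lp ℂ 2 μ →L[ℂ] Lp ℂ 2 (μ.restrict τ) × Lp ℂ 2 μ,
      (∀ h, ⇑(J h).1 =ᵐ[μ.restrict τ] fun ζ => conj (θ₂ ζ) * h ζ) ∧
      (∀ h, ⇑(J h).2 =ᵐ[μ] fun ζ => conjOrOne τ θ₁ ζ * h ζ) := by
  obtain ⟨m₁, m₂⟩ := memLp_top_of_norm_sq_add_norm_sq_eq_one hθ₁ hθ₂ hunit
  have h₂ : MemLp (fun ζ => conj (θ₂ ζ)) ∞ (μ.restrict τ) := m₂.star
  have h₁ : MemLp (conjOrOne τ θ₁) ∞ μ :=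
    ((memLp_indicator_iff_restrict hτ).2 m₁.star).add ((memLp_top_const 1).indicator hτ.compl)
  refine ⟨((mulOp _ h₂).comp (LpToLpRestrictCLM Ω ℂ ℂ μ 2 τ)).prod (mulOp _ h₁),
    fun h => ?_, fun h => coeFn_mulOp _ h₁ h⟩
  filter_upwards [coeFn_mulOp _ h₂ (LpToLpRestrictCLM Ω ℂ ℂ μ 2 τ h),
    LpToLpRestrictCLM_coeFn ℂ τ h] with ζ hJ hR
  simp [hJ, hR]

lemma norm_sq_add_norm_sq_eq_of_ae_eq_mul (hτ : MeasurableSet τ) {a b : Ω → ℂ}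
    (hab : ∀ᵐ ζ ∂μ.restrict τ, ‖a ζ‖ ^ 2 + ‖b ζ‖ ^ 2 = 1) (hb : ∀ᵐ ζ ∂μ.restrict τᶜ, ‖b ζ‖ = 1)
    {h : Lp ℂ 2 μ} {x : Lp ℂ 2 (μ.restrict τ)} {y : Lp ℂ 2 μ}
    (hx : x =ᵐ[μ.restrict τ] fun ζ => a ζ * h ζ) (hy : y =ᵐ[μ] fun ζ => b ζ * h ζ) :
    ‖x‖ ^ 2 + ‖y‖ ^ 2 = ‖h‖ ^ 2 := by
  rw [norm_sq_eq_integral, norm_sq_eq_integral, norm_sq_eq_integral,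
    ← integral_add_compl hτ (integrable_norm_sq y), ← integral_add_compl hτ (integrable_norm_sq h),
    ← add_assoc, ← integral_add (integrable_norm_sq x) (integrable_norm_sq y).restrict]
  congr 1
  · refine integral_congr_ae ?_
    filter_upwards [hx, ae_restrict_of_ae hy, hab] with ζ hxζ hyζ habζ
    simp only [hxζ, hyζ, norm_mul, mul_pow]
    linear_combination ‖h ζ‖ ^ 2 * habζ
  · refine integral_congr_ae ?_
    filter_upwards [ae_restrict_of_ae hy, hb] with ζ hyζ hbζ
    rw [hyζ, norm_mul, hbζ, one_mul]

lemma map_mul_comm_of_ae_eq_mul {J : Lp ℂ 2 μ → Lp ℂ 2 (μ.restrict τ) × Lp ℂ 2 μ} {a b : Ω → ℂ}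
    (hJ₁ : ∀ h, ⇑(J h).1 =ᵐ[μ.restrict τ] fun ζ => a ζ * h ζ)
    (hJ₂ : ∀ h, ⇑(J h).2 =ᵐ[μ] fun ζ => b ζ * h ζ) {u : Ω → ℂ}
    {Uτ : Lp ℂ 2 (μ.restrict τ) → Lp ℂ 2 (μ.restrict τ)}
    (hUτ : ∀ h, ⇑(Uτ h) =ᵐ[μ.restrict τ] fun ζ => u ζ * h ζ)
    {U : Lp ℂ 2 μ → Lp ℂ 2 μ} (hU : ∀ h, ⇑(U h) =ᵐ[μ] fun ζ => u ζ * h ζ) (h : Lp ℂ 2 μ) :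
    (J (U h)).1 = Uτ (J h).1 ∧ (J (U h)).2 = U (J h).2 := by
  constructor <;> refine Lp.ext ?_
  · filter_upwards [hJ₁ (U h), ae_restrict_of_ae (hU h), hUτ (J h).1, hJ₁ h]
      with ζ hJU hUh hUJ hJh
    rw [hJU, hUh, hUJ, hJh]
    ring
  · filter_upwards [hJ₂ (U h), hU h, hU (J h).2, hJ₂ h] with ζ hJU hUh hUJ hJh
    rw [hJU, hUh, hUJ, hJh]
    ring

lemma inner_add_inner_eq_zero_of_mem_thetaRange (hτ : MeasurableSet τ) {h : Ω → ℂ}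
    {x : Lp ℂ 2 (μ.restrict τ)} {y : Lp ℂ 2 μ}
    (hx : x =ᵐ[μ.restrict τ] fun ζ => conj (θ₂ ζ) * h ζ)
    (hy : ∀ᵐ ζ ∂μ.restrict τ, y ζ = conj (θ₁ ζ) * h ζ)
    {p : Lp ℂ 2 (μ.restrict τ) × Lp ℂ 2 μ} (hp : p ∈ thetaRange μ τ θ₁ θ₂) :
    ⟪x, p.1⟫_ℂ + ⟪y, p.2⟫_ℂ = 0 := by
  obtain ⟨w, -, hp₁, hp₂⟩ := hp
  have hsnd : ⟪y, p.2⟫_ℂ = -⟪x, p.1⟫_ℂ := calc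
    ⟪y, p.2⟫_ℂ = ∫ ζ, τ.indicator (fun ζ => -θ₂ ζ * w ζ * conj (y ζ)) ζ ∂μ := by
      rw [L2.inner_def]
      refine integral_congr_ae ?_
      filter_upwards [hp₂] with ζ hζ
      by_cases hmem : ζ ∈ τ <;> simp [hζ, hmem]
    _ = ∫ ζ in τ, -(p.1 ζ * conj (x ζ)) ∂μ := by
      rw [integral_indicator hτ]
      refine integral_congr_ae ?_
      filter_upwards [hx, hy, hp₁] with ζ hxζ hyζ hpζ
      rw [hxζ, hyζ, hpζ]
      simp only [map_mul, Complex.conj_conj]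
      ring
    _ = -⟪x, p.1⟫_ℂ := by
      rw [integral_neg, L2.inner_def]
      simp only [RCLike.inner_apply]
  rw [hsnd, add_neg_cancel]

lemma exists_eq_add_mem_thetaRange (hτ : MeasurableSet τ)
    (hθ₁ : AEStronglyMeasurable θ₁ (μ.restrict τ)) (hθ₂ : AEStronglyMeasurable θ₂ (μ.restrict τ))
    (hunit : ∀ᵐ ζ ∂μ.restrict τ, ‖θ₁ ζ‖ ^ 2 + ‖θ₂ ζ‖ ^ 2 = 1)
    {J : Lp ℂ 2 μ → Lp ℂ 2 (μ.restrict τ) × Lp ℂ 2 μ}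
    (hJ₁ : ∀ h, ⇑(J h).1 =ᵐ[μ.restrict τ] fun ζ => conj (θ₂ ζ) * h ζ)
    (hJ₂ : ∀ h, ⇑(J h).2 =ᵐ[μ] fun ζ => conjOrOne τ θ₁ ζ * h ζ)
    (p : Lp ℂ 2 (μ.restrict τ) × Lp ℂ 2 μ) :
    ∃ h : Lp ℂ 2 μ, ∃ q ∈ thetaRange μ τ θ₁ θ₂, p = J h + q := by
  obtain ⟨p₁, p₂⟩ := p
  obtain ⟨m₁, m₂⟩ := memLp_top_of_norm_sq_add_norm_sq_eq_one hθ₁ hθ₂ hunit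
  have hp₂ : MemLp p₂ 2 (μ.restrict τ) := (Lp.memLp p₂).restrict τ
  set w := fun ζ => conj (θ₁ ζ) * p₁ ζ - conj (θ₂ ζ) * p₂ ζ
  have hw : MemLp w 2 (μ.restrict τ) := ((Lp.memLp p₁).mul' m₁.star).sub (hp₂.mul' m₂.star)
  have hq₁ : MemLp (fun ζ => θ₁ ζ * w ζ) 2 (μ.restrict τ) := hw.mul' m₁
  have hq₂ : MemLp (τ.indicator fun ζ => -θ₂ ζ * w ζ) 2 μ :=
    (memLp_indicator_iff_restrict hτ).2 (hw.mul' m₂.neg)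
  have hh : MemLp (τ.indicator (fun ζ => θ₂ ζ * p₁ ζ + θ₁ ζ * p₂ ζ) + τᶜ.indicator p₂) 2 μ :=
    ((memLp_indicator_iff_restrict hτ).2 (((Lp.memLp p₁).mul' m₂).add (hp₂.mul' m₁))).add
      ((Lp.memLp p₂).indicator hτ.compl)
  have hu := hunit.mono fun _ => mul_conj_add_mul_conj_eq_one
  refine ⟨hh.toLp _, (hq₁.toLp _, hq₂.toLp _), ⟨w, hw, hq₁.coeFn_toLp, hq₂.coeFn_toLp⟩, ?_⟩
  refine Prod.ext (Lp.ext ?_) (Lp.ext ?_)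
  · filter_upwards [Lp.coeFn_add (J (hh.toLp _)).1 (hq₁.toLp _), hJ₁ (hh.toLp _),
      hq₁.coeFn_toLp, ae_restrict_of_ae hh.coeFn_toLp, hu, ae_restrict_mem hτ]
      with ζ hadd hJ hq hhζ huζ hmem
    simp only [Prod.fst_add, hadd, Pi.add_apply, hJ, hq, hhζ, w, Set.indicator_of_mem hmem,
      Set.indicator_of_notMem (Set.notMem_compl_iff.2 hmem), add_zero]
    linear_combination (-p₁ ζ) * huζ
  · filter_upwards [Lp.coeFn_add (J (hh.toLp _)).2 (hq₂.toLp _), hJ₂ (hh.toLp _),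
      hq₂.coeFn_toLp, hh.coeFn_toLp, (ae_restrict_iff' hτ).1 hu] with ζ hadd hJ hq hhζ huζ
    simp only [Prod.snd_add, hadd, Pi.add_apply, hJ, hq, hhζ]
    by_cases hmem : ζ ∈ τ
    · simp only [conjOrOne_of_mem hmem, Set.indicator_of_mem hmem,
        Set.indicator_of_notMem (Set.notMem_compl_iff.2 hmem), add_zero, w]
      linear_combination (-p₂ ζ) * huζ hmem
    · simp [conjOrOne_of_notMem hmem, hmem]

end Decomposition

theorem stmt_19_general {Ω : Type*} [MeasurableSpace Ω] (μ : Measure Ω)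
    (τ : Set Ω) (hτ : MeasurableSet τ)
    (g₁ g₂ : Ω → ℂ) (hg₁m : Measurable g₁) (hg₂m : Measurable g₂)
    (hpos : ∀ᵐ ζ ∂μ, g₁ ζ ≠ 0 ∨ g₂ ζ ≠ 0)
    (θ₁ θ₂ : Ω → ℂ)
    (hθ₁ : ∀ ζ, θ₁ ζ = g₁ ζ / (Real.sqrt (‖g₁ ζ‖ ^ 2 + ‖g₂ ζ‖ ^ 2) : ℂ))
    (hθ₂ : ∀ ζ, θ₂ ζ = g₂ ζ / (Real.sqrt (‖g₁ ζ‖ ^ 2 + ‖g₂ ζ‖ ^ 2) : ℂ))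
    (E₀ : Set ((Lp ℂ 2 (μ.restrict τ)) × (Lp ℂ 2 μ)))
    (hE₀ : E₀ = {p : (Lp ℂ 2 (μ.restrict τ)) × (Lp ℂ 2 μ) | ∃ h : Ω → ℂ, MemLp h 2 (μ.restrict τ) ∧
      (⇑p.1 =ᵐ[μ.restrict τ] fun ζ => θ₁ ζ * h ζ) ∧
      (⇑p.2 =ᵐ[μ] τ.indicator fun ζ => -(θ₂ ζ) * h ζ)})
    (u : Ω → ℂ)
    (Uτ' : Lp ℂ 2 (μ.restrict τ) →L[ℂ] Lp ℂ 2 (μ.restrict τ))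
    (hUτ' : ∀ h, ⇑(Uτ' h) =ᵐ[μ.restrict τ] fun ζ => u ζ * ⇑h ζ)
    (UT : Lp ℂ 2 μ →L[ℂ] Lp ℂ 2 μ)
    (hUT : ∀ h, ⇑(UT h) =ᵐ[μ] fun ζ => u ζ * ⇑h ζ) :
    ∃ J : Lp ℂ 2 μ →ₗ[ℂ] (Lp ℂ 2 (μ.restrict τ)) × (Lp ℂ 2 μ),
      (∀ h : Lp ℂ 2 μ,
        ⇑(J h).1 =ᵐ[μ.restrict τ] fun ζ => (starRingEnd ℂ) (θ₂ ζ) * ⇑h ζ) ∧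
      (∀ h : Lp ℂ 2 μ,
        ⇑(J h).2 =ᵐ[μ] fun ζ =>
          τ.indicator (fun ζ' => (starRingEnd ℂ) (θ₁ ζ') * ⇑h ζ') ζ +
          τᶜ.indicator (⇑h) ζ) ∧
      (∀ h : Lp ℂ 2 μ, ‖(J h).1‖ ^ 2 + ‖(J h).2‖ ^ 2 = ‖h‖ ^ 2) ∧
      (∀ h : Lp ℂ 2 μ, (J (UT h)).1 = Uτ' (J h).1 ∧ (J (UT h)).2 = UT (J h).2) ∧
      (∀ h : Lp ℂ 2 μ, ∀ p ∈ E₀,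
        (⟪(J h).1, p.1⟫_ℂ + ⟪(J h).2, p.2⟫_ℂ : ℂ) = 0) ∧
      (∀ p : (Lp ℂ 2 (μ.restrict τ)) × (Lp ℂ 2 μ),
        ∃ h : Lp ℂ 2 μ, ∃ q ∈ E₀, p = J h + q) := by
  subst hE₀
  have hθ₁m : Measurable θ₁ := by rw [funext hθ₁]; fun_prop
  have hθ₂m : Measurable θ₂ := by rw [funext hθ₂]; fun_prop
  have hunit : ∀ᵐ ζ ∂μ.restrict τ, ‖θ₁ ζ‖ ^ 2 + ‖θ₂ ζ‖ ^ 2 = 1 := ae_restrict_of_ae <| by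
    filter_upwards [hpos] with ζ hζ
    rw [hθ₁, hθ₂]
    exact norm_div_sqrt_sq_add_norm_div_sqrt_sq hζ
  obtain ⟨J, hJ₁, hJ₂⟩ := exists_clm_ae_eq_conj_mul hτ hθ₁m.aestronglyMeasurable
    hθ₂m.aestronglyMeasurable hunit
  have hJ₂τ : ∀ h : Lp ℂ 2 μ, ∀ᵐ ζ ∂μ.restrict τ, (J h).2 ζ = conj (θ₁ ζ) * h ζ := fun h => by
    filter_upwards [ae_restrict_of_ae (hJ₂ h), ae_restrict_mem hτ] with ζ hζ hmem
    rw [hζ, conjOrOne_of_mem hmem]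
  refine ⟨J, hJ₁, fun h => (hJ₂ h).mono fun ζ hζ => hζ.trans (conjOrOne_mul _ ζ), fun h => ?_,
    map_mul_comm_of_ae_eq_mul hJ₁ hJ₂ hUτ' hUT, fun h p hp =>
    inner_add_inner_eq_zero_of_mem_thetaRange hτ (hJ₁ h) (hJ₂τ h) hp,
    exists_eq_add_mem_thetaRange hτ hθ₁m.aestronglyMeasurable hθ₂m.aestronglyMeasurable hunit
      hJ₁ hJ₂⟩
  refine norm_sq_add_norm_sq_eq_of_ae_eq_mul hτ ?_
    (ae_restrict_of_forall_mem hτ.compl fun ζ hζ => by rw [conjOrOne_of_notMem hζ, norm_one])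
    (hJ₁ h) (hJ₂ h)
  filter_upwards [hunit, ae_restrict_mem hτ] with ζ hζ hmem
  rw [conjOrOne_of_mem hmem, Complex.norm_conj, Complex.norm_conj, add_comm, hζ]

/-- with the circle abstracted as a probability space `(Ω, μ)` and
`τ ⊆ Ω` measurable, let `g₂` be supported in `τ`, `|g₁|² + |g₂|² > 0` a.e.,
`θ₁ = g₁/(|g₁|²+|g₂|²)^{1/2}`, `θ₂ = g₂/(|g₁|²+|g₂|²)^{1/2}`, and
`E₀ = {θ₁ h ⊕ (−θ₂ h) : h ∈ L²(τ)} ⊆ L²(τ) ⊕ L²(Ω)`.  Let `u` be the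
independent variable (`|u| = 1` a.e.) with multiplication operators `Uτ'`, `UT`
on `L²(τ)`, `L²(Ω)`.  Then the map
`J h = conj θ₂ · h|_τ ⊕ (conj θ₁ · h|_τ + h|_{Ω∖τ})` is a well-defined linear
isometry of `L²(Ω)` onto the orthogonal complement of `E₀`, it intertwines
`U_Ω` with `(U_τ ⊕ U_Ω)` restricted to that complement, and
`L²(τ) ⊕ L²(Ω) = J L²(Ω) ⊕ E₀`. -/
theorem stmt_19 {Ω : Type*} [MeasurableSpace Ω] (μ : Measure Ω) [IsProbabilityMeasure μ]
    (τ : Set Ω) (hτ : MeasurableSet τ)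
    (g₁ g₂ : Ω → ℂ) (hg₁m : Measurable g₁) (hg₂m : Measurable g₂)
    (hg₂supp : ∀ᵐ ζ ∂μ, ζ ∉ τ → g₂ ζ = 0)
    (hpos : ∀ᵐ ζ ∂μ, g₁ ζ ≠ 0 ∨ g₂ ζ ≠ 0)
    (θ₁ θ₂ : Ω → ℂ)
    (hθ₁ : ∀ ζ, θ₁ ζ = g₁ ζ / (Real.sqrt (‖g₁ ζ‖ ^ 2 + ‖g₂ ζ‖ ^ 2) : ℂ))
    (hθ₂ : ∀ ζ, θ₂ ζ = g₂ ζ / (Real.sqrt (‖g₁ ζ‖ ^ 2 + ‖g₂ ζ‖ ^ 2) : ℂ))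
    (E₀ : Set ((Lp ℂ 2 (μ.restrict τ)) × (Lp ℂ 2 μ)))
    (hE₀ : E₀ = {p : (Lp ℂ 2 (μ.restrict τ)) × (Lp ℂ 2 μ) | ∃ h : Ω → ℂ, MemLp h 2 (μ.restrict τ) ∧
      (⇑p.1 =ᵐ[μ.restrict τ] fun ζ => θ₁ ζ * h ζ) ∧
      (⇑p.2 =ᵐ[μ] τ.indicator fun ζ => -(θ₂ ζ) * h ζ)})
    (u : Ω → ℂ) (hu : ∀ᵐ ζ ∂μ, ‖u ζ‖ = 1)
    (Uτ' : Lp ℂ 2 (μ.restrict τ) →L[ℂ] Lp ℂ 2 (μ.restrict τ))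
    (hUτ' : ∀ h, ⇑(Uτ' h) =ᵐ[μ.restrict τ] fun ζ => u ζ * ⇑h ζ)
    (UT : Lp ℂ 2 μ →L[ℂ] Lp ℂ 2 μ)
    (hUT : ∀ h, ⇑(UT h) =ᵐ[μ] fun ζ => u ζ * ⇑h ζ) :
    ∃ J : Lp ℂ 2 μ →ₗ[ℂ] (Lp ℂ 2 (μ.restrict τ)) × (Lp ℂ 2 μ),
      (∀ h : Lp ℂ 2 μ,
        ⇑(J h).1 =ᵐ[μ.restrict τ] fun ζ => (starRingEnd ℂ) (θ₂ ζ) * ⇑h ζ) ∧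
      (∀ h : Lp ℂ 2 μ,
        ⇑(J h).2 =ᵐ[μ] fun ζ =>
          τ.indicator (fun ζ' => (starRingEnd ℂ) (θ₁ ζ') * ⇑h ζ') ζ +
          τᶜ.indicator (⇑h) ζ) ∧
      (∀ h : Lp ℂ 2 μ, ‖(J h).1‖ ^ 2 + ‖(J h).2‖ ^ 2 = ‖h‖ ^ 2) ∧
      (∀ h : Lp ℂ 2 μ, (J (UT h)).1 = Uτ' (J h).1 ∧ (J (UT h)).2 = UT (J h).2) ∧
      (∀ h : Lp ℂ 2 μ, ∀ p ∈ E₀,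
        (⟪(J h).1, p.1⟫_ℂ + ⟪(J h).2, p.2⟫_ℂ : ℂ) = 0) ∧
      (∀ p : (Lp ℂ 2 (μ.restrict τ)) × (Lp ℂ 2 μ),
        ∃ h : Lp ℂ 2 μ, ∃ q ∈ E₀, p = J h + q) :=
  stmt_19_general μ τ hτ g₁ g₂ hg₁m hg₂m hpos θ₁ θ₂ hθ₁ hθ₂ E₀ hE₀ u Uτ' hUτ' UT hUT
end
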